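/- arXiv:math/0203202 — 4 statements merged into one kernel-verified Lean document; each statement's English description precedes it below -/
import Mathlib

section
/- The Gauss map G(x) = (1/‖x‖)(x₁,...,x_k, −x_{k+1},...,−x_{k+l}) restricts to a diffeomorphism from {Q = ε} onto the open subset {y ∈ S^{n-1} : Q(y) > 0} when ε > 0, and onto {y ∈ S^{n-1} : Q(y) < 0} when ε < 0, and maps S^{n-1} ∩ {Q = 0} diffeomorphically onto itself. -/
open Set

/-- `f` restricts to a diffeomorphism from `s` onto `t`: it maps `s` bijectively onto `t`,
is smooth on `s`, and has a smooth inverse defined on `t`. -/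
def RestrictsToDiffeo {n : ℕ} (f : EuclideanSpace ℝ (Fin n) → EuclideanSpace ℝ (Fin n))
    (s t : Set (EuclideanSpace ℝ (Fin n))) : Prop :=
  MapsTo f s t ∧ InjOn f s ∧ f '' s = t ∧ ContDiffOn ℝ (⊤ : ℕ∞) f s ∧
    ∃ g : EuclideanSpace ℝ (Fin n) → EuclideanSpace ℝ (Fin n),
      ContDiffOn ℝ (⊤ : ℕ∞) g t ∧ MapsTo g t s ∧ (∀ x ∈ s, g (f x) = x) ∧ ∀ y ∈ t, f (g y) = y


section Aux

variable {m k : ℕ}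

/-- The sign-flip map. -/
noncomputable def Jmap (k : ℕ) (x : EuclideanSpace ℝ (Fin m)) : EuclideanSpace ℝ (Fin m) :=
  WithLp.toLp 2 (fun i => if (i : ℕ) < k then x i else -x i)

lemma Jmap_Jmap (x : EuclideanSpace ℝ (Fin m)) : Jmap k (Jmap k x) = x := by
  ext i
  by_cases h : (i : ℕ) < k <;> simp [Jmap, h]

lemma Jmap_smul (c : ℝ) (x : EuclideanSpace ℝ (Fin m)) :
    Jmap k (c • x) = c • Jmap k x := by
  ext i
  by_cases h : (i : ℕ) < k <;> simp [Jmap, h, PiLp.smul_apply, smul_eq_mul]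

lemma norm_Jmap (x : EuclideanSpace ℝ (Fin m)) : ‖Jmap k x‖ = ‖x‖ := by
  rw [EuclideanSpace.norm_eq, EuclideanSpace.norm_eq]
  congr 1
  refine Finset.sum_congr rfl fun i _ => ?_
  by_cases h : (i : ℕ) < k <;> simp [Jmap, h]

lemma contDiff_Jmap : ContDiff ℝ (⊤ : ℕ∞) (Jmap k : EuclideanSpace ℝ (Fin m) → EuclideanSpace ℝ (Fin m)) := by
  rw [contDiff_euclidean]
  intro i
  by_cases h : (i : ℕ) < k
  · simpa [Jmap, h] using (EuclideanSpace.proj (𝕜 := ℝ) i).contDiff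
  · simpa [Jmap, h] using (EuclideanSpace.proj (𝕜 := ℝ) i).contDiff.neg

end Aux

section Main

variable {k l : ℕ} {Q : EuclideanSpace ℝ (Fin (k + l)) → ℝ}
  {G : EuclideanSpace ℝ (Fin (k + l)) → EuclideanSpace ℝ (Fin (k + l))}

lemma Q_Jmap (hQ : ∀ x, Q x = ∑ i : Fin (k + l), (if (i : ℕ) < k then (1 : ℝ) else -1) * x i * x i)
    (x : EuclideanSpace ℝ (Fin (k + l))) : Q (Jmap k x) = Q x := by
  rw [hQ, hQ]
  refine Finset.sum_congr rfl fun i _ => ?_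
  by_cases h : (i : ℕ) < k <;> simp [Jmap, h] <;> ring

lemma Q_smul (hQ : ∀ x, Q x = ∑ i : Fin (k + l), (if (i : ℕ) < k then (1 : ℝ) else -1) * x i * x i)
    (c : ℝ) (x : EuclideanSpace ℝ (Fin (k + l))) : Q (c • x) = c ^ 2 * Q x := by
  rw [hQ, hQ, Finset.mul_sum]
  refine Finset.sum_congr rfl fun i _ => ?_
  by_cases h : (i : ℕ) < k <;> simp [h, PiLp.smul_apply, smul_eq_mul] <;> ring

lemma Q_zero (hQ : ∀ x, Q x = ∑ i : Fin (k + l), (if (i : ℕ) < k then (1 : ℝ) else -1) * x i * x i) :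
    Q 0 = 0 := by simp [hQ]

lemma contDiff_Q (hQ : ∀ x, Q x = ∑ i : Fin (k + l), (if (i : ℕ) < k then (1 : ℝ) else -1) * x i * x i) :
    ContDiff ℝ (⊤ : ℕ∞) Q := by
  have : Q = fun x => ∑ i : Fin (k + l), (if (i : ℕ) < k then (1 : ℝ) else -1) * x i * x i :=
    funext hQ
  rw [this]
  apply ContDiff.sum
  intro i _
  exact (contDiff_const.mul (EuclideanSpace.proj (𝕜 := ℝ) i).contDiff).mul
    (EuclideanSpace.proj (𝕜 := ℝ) i).contDiff

lemma G_eq (hG : ∀ x, G x = ‖x‖⁻¹ • (WithLp.toLp 2 (fun i : Fin (k + l) =>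
      if (i : ℕ) < k then x i else -x i) : EuclideanSpace ℝ (Fin (k + l))))
    (x : EuclideanSpace ℝ (Fin (k + l))) : G x = ‖x‖⁻¹ • Jmap k x := hG x

lemma contDiffOn_G (hG : ∀ x, G x = ‖x‖⁻¹ • (WithLp.toLp 2 (fun i : Fin (k + l) =>
      if (i : ℕ) < k then x i else -x i) : EuclideanSpace ℝ (Fin (k + l)))) :
    ContDiffOn ℝ (⊤ : ℕ∞) G {x : EuclideanSpace ℝ (Fin (k + l)) | x ≠ 0} := by
  have hGe : G = fun x => ‖x‖⁻¹ • Jmap k x := funext fun x => G_eq hG x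
  rw [hGe]
  intro x hx
  apply ContDiffAt.contDiffWithinAt
  have h1 : ContDiffAt ℝ (⊤ : ℕ∞) (fun x : EuclideanSpace ℝ (Fin (k + l)) => ‖x‖⁻¹) x :=
    (contDiffAt_norm ℝ hx).inv (norm_ne_zero_iff.mpr hx)
  exact h1.smul contDiff_Jmap.contDiffAt

lemma norm_G (hG : ∀ x, G x = ‖x‖⁻¹ • (WithLp.toLp 2 (fun i : Fin (k + l) =>
      if (i : ℕ) < k then x i else -x i) : EuclideanSpace ℝ (Fin (k + l))))
    {x : EuclideanSpace ℝ (Fin (k + l))} (hx : x ≠ 0) : ‖G x‖ = 1 := by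
  rw [G_eq hG, norm_smul, norm_Jmap, norm_inv, norm_norm]
  exact inv_mul_cancel₀ (norm_ne_zero_iff.mpr hx)

lemma Q_G (hQ : ∀ x, Q x = ∑ i : Fin (k + l), (if (i : ℕ) < k then (1 : ℝ) else -1) * x i * x i)
    (hG : ∀ x, G x = ‖x‖⁻¹ • (WithLp.toLp 2 (fun i : Fin (k + l) =>
      if (i : ℕ) < k then x i else -x i) : EuclideanSpace ℝ (Fin (k + l))))
    (x : EuclideanSpace ℝ (Fin (k + l))) : Q (G x) = ‖x‖⁻¹ ^ 2 * Q x := by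
  rw [G_eq hG, Q_smul hQ, Q_Jmap hQ]

/-- The main helper: for `ε ≠ 0`. -/
lemma key (hQ : ∀ x, Q x = ∑ i : Fin (k + l), (if (i : ℕ) < k then (1 : ℝ) else -1) * x i * x i)
    (hG : ∀ x, G x = ‖x‖⁻¹ • (WithLp.toLp 2 (fun i : Fin (k + l) =>
      if (i : ℕ) < k then x i else -x i) : EuclideanSpace ℝ (Fin (k + l))))
    (ε : ℝ) (hε : ε ≠ 0) :
    RestrictsToDiffeo G {x | Q x = ε} {y | ‖y‖ = 1 ∧ 0 < ε * Q y} := by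
  have hs0 : ∀ x ∈ {x : EuclideanSpace ℝ (Fin (k + l)) | Q x = ε}, x ≠ 0 := by
    rintro x hx rfl
    simp only [mem_setOf_eq] at hx
    exact hε ((Q_zero hQ).symm.trans hx).symm
  have hQt : ∀ y ∈ {y : EuclideanSpace ℝ (Fin (k + l)) | ‖y‖ = 1 ∧ 0 < ε * Q y}, Q y ≠ 0 := by
    rintro y ⟨-, hy⟩ h0
    simp [h0] at hy
  have hdivpos : ∀ y ∈ {y : EuclideanSpace ℝ (Fin (k + l)) | ‖y‖ = 1 ∧ 0 < ε * Q y},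
      0 < ε / Q y := by
    rintro y ⟨-, hy⟩
    rcases mul_pos_iff.mp hy with ⟨h1, h2⟩ | ⟨h1, h2⟩
    · exact div_pos h1 h2
    · exact div_pos_of_neg_of_neg h1 h2
  have hmapsf : MapsTo G {x | Q x = ε} {y | ‖y‖ = 1 ∧ 0 < ε * Q y} := by
    intro x hx
    simp only [mem_setOf_eq] at hx
    have hx0 : x ≠ 0 := hs0 x hx
    refine ⟨norm_G hG hx0, ?_⟩
    have hn : ‖x‖ ≠ 0 := norm_ne_zero_iff.mpr hx0
    rw [Q_G hQ hG, hx]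
    calc (0:ℝ) < ‖x‖⁻¹ ^ 2 * (ε * ε) := mul_pos (by positivity) (mul_self_pos.mpr hε)
    _ = ε * (‖x‖⁻¹ ^ 2 * ε) := by ring
  have hleft : ∀ x ∈ {x : EuclideanSpace ℝ (Fin (k + l)) | Q x = ε},
      Real.sqrt (ε / Q (G x)) • Jmap k (G x) = x := by
    intro x hx
    simp only [mem_setOf_eq] at hx
    have hx0 : x ≠ 0 := hs0 x hx
    have hn : ‖x‖ ≠ 0 := norm_ne_zero_iff.mpr hx0
    have hQGx : Q (G x) = ‖x‖⁻¹ ^ 2 * ε := by rw [Q_G hQ hG, hx]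
    rw [hQGx, G_eq hG, Jmap_smul, Jmap_Jmap]
    have h1 : ε / (‖x‖⁻¹ ^ 2 * ε) = ‖x‖ ^ 2 := by field_simp
    rw [h1, Real.sqrt_sq (norm_nonneg x), smul_smul, mul_inv_cancel₀ hn, one_smul]
  have hmapsg : MapsTo (fun y => Real.sqrt (ε / Q y) • Jmap k y)
      {y | ‖y‖ = 1 ∧ 0 < ε * Q y} {x | Q x = ε} := by
    intro y hy
    show Q _ = ε
    simp only
    rw [Q_smul hQ, Q_Jmap hQ, Real.sq_sqrt (hdivpos y hy).le,
      div_mul_cancel₀ _ (hQt y hy)]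
  have hright : ∀ y ∈ {y : EuclideanSpace ℝ (Fin (k + l)) | ‖y‖ = 1 ∧ 0 < ε * Q y},
      G (Real.sqrt (ε / Q y) • Jmap k y) = y := by
    intro y hy
    obtain ⟨hy1, hy2⟩ := hy
    have hd := hdivpos y ⟨hy1, hy2⟩
    have ht0 : Real.sqrt (ε / Q y) ≠ 0 := (Real.sqrt_pos.mpr hd).ne'
    have hny : ‖Real.sqrt (ε / Q y) • Jmap k y‖ = Real.sqrt (ε / Q y) := by
      rw [norm_smul, norm_Jmap, hy1, mul_one, Real.norm_eq_abs,
        abs_of_pos (Real.sqrt_pos.mpr hd)]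
    rw [G_eq hG, hny, Jmap_smul, Jmap_Jmap, smul_smul, inv_mul_cancel₀ ht0, one_smul]
  refine ⟨hmapsf, ?_, ?_, ?_, fun y => Real.sqrt (ε / Q y) • Jmap k y, ?_, hmapsg,
    hleft, hright⟩
  · intro a ha b hb hab
    have h := hleft a ha
    rw [hab, hleft b hb] at h
    exact h.symm
  · apply Subset.antisymm
    · exact image_subset_iff.mpr hmapsf
    · intro y hy
      exact ⟨_, hmapsg hy, hright y hy⟩
  · exact (contDiffOn_G hG).mono fun x hx => hs0 x hx
  · intro y hy
    apply ContDiffAt.contDiffWithinAt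
    have hQs : ContDiffAt ℝ (⊤ : ℕ∞) (fun y : EuclideanSpace ℝ (Fin (k + l)) =>
        Real.sqrt (ε / Q y)) y := by
      exact ContDiffAt.comp (𝕜 := ℝ) (g := Real.sqrt) y
        (Real.contDiffAt_sqrt (hdivpos y hy).ne')
        (contDiffAt_const.div (contDiff_Q hQ).contDiffAt (hQt y hy))
    exact hQs.smul contDiff_Jmap.contDiffAt

/-- For the cone case. -/
lemma key0 (hQ : ∀ x, Q x = ∑ i : Fin (k + l), (if (i : ℕ) < k then (1 : ℝ) else -1) * x i * x i)
    (hG : ∀ x, G x = ‖x‖⁻¹ • (WithLp.toLp 2 (fun i : Fin (k + l) =>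
      if (i : ℕ) < k then x i else -x i) : EuclideanSpace ℝ (Fin (k + l)))) :
    RestrictsToDiffeo G {y | ‖y‖ = 1 ∧ Q y = 0} {y | ‖y‖ = 1 ∧ Q y = 0} := by
  have hs0 : ∀ x ∈ {y : EuclideanSpace ℝ (Fin (k + l)) | ‖y‖ = 1 ∧ Q y = 0}, x ≠ 0 := by
    rintro x ⟨h1, -⟩ rfl
    simp at h1
  have hGJ : ∀ x ∈ {y : EuclideanSpace ℝ (Fin (k + l)) | ‖y‖ = 1 ∧ Q y = 0},
      G x = Jmap k x := by
    rintro x ⟨h1, -⟩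
    rw [G_eq hG, h1, inv_one, one_smul]
  have hmaps : MapsTo G {y | ‖y‖ = 1 ∧ Q y = 0} {y | ‖y‖ = 1 ∧ Q y = 0} := by
    rintro x ⟨h1, h2⟩
    constructor
    · rw [hGJ x ⟨h1, h2⟩, norm_Jmap, h1]
    · rw [hGJ x ⟨h1, h2⟩, Q_Jmap hQ, h2]
  have hinv : ∀ x ∈ {y : EuclideanSpace ℝ (Fin (k + l)) | ‖y‖ = 1 ∧ Q y = 0},
      G (G x) = x := by
    intro x hx
    rw [hGJ _ (hmaps hx), hGJ x hx, Jmap_Jmap]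
  refine ⟨hmaps, ?_, ?_, ?_, G, ?_, hmaps, hinv, hinv⟩
  · intro a ha b hb hab
    have h := hinv a ha
    rw [hab, hinv b hb] at h
    exact h.symm
  · apply Subset.antisymm
    · exact image_subset_iff.mpr hmaps
    · intro y hy
      exact ⟨G y, hmaps hy, hinv y hy⟩
  · exact (contDiffOn_G hG).mono fun x hx => hs0 x hx
  · exact (contDiffOn_G hG).mono fun x hx => hs0 x hx

end Main

/-- The Gauss map `G(x) = (1/‖x‖)(x₁,…,x_k,−x_{k+1},…,−x_{k+l})` restricts to a
diffeomorphism from `{Q = ε}` onto `{y ∈ S^{n-1} : Q y > 0}` when `ε > 0`, onto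
`{y ∈ S^{n-1} : Q y < 0}` when `ε < 0`, and maps `S^{n-1} ∩ {Q = 0}` diffeomorphically
onto itself. -/
theorem gauss_map_diffeo (k l : ℕ) (hk : 0 < k) (hl : 0 < l)
    (Q : EuclideanSpace ℝ (Fin (k + l)) → ℝ)
    (hQ : ∀ x, Q x = ∑ i : Fin (k + l), (if (i : ℕ) < k then (1 : ℝ) else -1) * x i * x i)
    (G : EuclideanSpace ℝ (Fin (k + l)) → EuclideanSpace ℝ (Fin (k + l)))
    (hG : ∀ x, G x = ‖x‖⁻¹ • (WithLp.toLp 2 (fun i : Fin (k + l) =>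
      if (i : ℕ) < k then x i else -x i) : EuclideanSpace ℝ (Fin (k + l)))) :
    (∀ ε : ℝ, 0 < ε →
      RestrictsToDiffeo G {x | Q x = ε} {y | ‖y‖ = 1 ∧ 0 < Q y}) ∧
    (∀ ε : ℝ, ε < 0 →
      RestrictsToDiffeo G {x | Q x = ε} {y | ‖y‖ = 1 ∧ Q y < 0}) ∧
    RestrictsToDiffeo G {y | ‖y‖ = 1 ∧ Q y = 0} {y | ‖y‖ = 1 ∧ Q y = 0} := by
  refine ⟨fun ε hε => ?_, fun ε hε => ?_, key0 hQ hG⟩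
  · have h := key hQ hG ε hε.ne'
    have hset : {y : EuclideanSpace ℝ (Fin (k + l)) | ‖y‖ = 1 ∧ 0 < ε * Q y} =
        {y | ‖y‖ = 1 ∧ 0 < Q y} := by
      ext y
      simp only [mem_setOf_eq, and_congr_right_iff]
      intro _
      constructor
      · intro hy
        rcases mul_pos_iff.mp hy with ⟨-, h2⟩ | ⟨h1, -⟩
        · exact h2
        · exact absurd hε (not_lt.mpr h1.le)
      · exact fun hy => mul_pos hε hy
    rwa [hset] at h
  · have h := key hQ hG ε hε.ne
    have hset : {y : EuclideanSpace ℝ (Fin (k + l)) | ‖y‖ = 1 ∧ 0 < ε * Q y} =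
        {y | ‖y‖ = 1 ∧ Q y < 0} := by
      ext y
      simp only [mem_setOf_eq, and_congr_right_iff]
      intro _
      constructor
      · intro hy
        rcases mul_pos_iff.mp hy with ⟨h1, -⟩ | ⟨-, h2⟩
        · exact absurd hε (not_lt.mpr h1.le)
        · exact h2
      · exact fun hy => mul_pos_of_neg_of_neg hε hy
    rwa [hset] at h
end

section
/- Let Q(x) = Σ_{i=1}^k x_i² − Σ_{j=1}^l x_{k+j}², a = √(x₁²+...+x_k²), b = √(x_{k+1}²+...+x_n²), ε > 0, and f₁ = √(a² + ε) − b. Then for any point x with f₁(x) = t < 0, the differential df₁(x) is proportional (with positive factor) to dQ(x₁,...,x_k, λx_{k+1},...,λx_n) where λ = (b+t)/b, and moreover Q(x₁,...,x_k, λx_{k+1},...,λx_n) = −ε. In particular the Gauss image of each negative level set {f₁ = t} equals the Gauss image of {Q = −ε}. -/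
open Finset Real

variable {n : ℕ}

private lemma hasFDerivAt_wsqAux (c : Fin n → ℝ) (z : EuclideanSpace ℝ (Fin n)) :
    HasFDerivAt (fun w : EuclideanSpace ℝ (Fin n) => ∑ i, c i * w i ^ 2)
      (∑ i, (2 * c i * z i) • (EuclideanSpace.proj i : EuclideanSpace ℝ (Fin n) →L[ℝ] ℝ)) z := by
  apply HasFDerivAt.fun_sum (A' := fun i => (2 * c i * z i) • (EuclideanSpace.proj i : EuclideanSpace ℝ (Fin n) →L[ℝ] ℝ))
  intro i _
  show HasFDerivAt (fun w : EuclideanSpace ℝ (Fin n) => c i * w i ^ 2) ((2 * c i * z i) • (EuclideanSpace.proj i : EuclideanSpace ℝ (Fin n) →L[ℝ] ℝ)) z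
  have h := (EuclideanSpace.proj i : EuclideanSpace ℝ (Fin n) →L[ℝ] ℝ).hasFDerivAt (x := z)
  have hd : HasDerivAt (fun s : ℝ => c i * s ^ 2) (c i * (2 * z i)) (z i) := by
    simpa using (hasDerivAt_pow 2 (z i)).const_mul (c i)
  refine (hd.comp_hasFDerivAt z h).congr_fderiv ?_
  exact (by ext w; simp only [ContinuousLinearMap.smul_apply, smul_eq_mul, EuclideanSpace.coe_proj]; ring)

private lemma hasGradientAt_wsqAux (c : Fin n → ℝ) (z : EuclideanSpace ℝ (Fin n)) :
    HasGradientAt (fun w : EuclideanSpace ℝ (Fin n) => ∑ i, c i * w i * w i)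
      (WithLp.toLp 2 (fun i => 2 * c i * z i : Fin n → ℝ) : EuclideanSpace ℝ (Fin n)) z := by
  have hfun : (fun w : EuclideanSpace ℝ (Fin n) => ∑ i, c i * w i * w i)
      = fun w => ∑ i, c i * w i ^ 2 := by
    funext w; exact Finset.sum_congr rfl fun i _ => by ring
  rw [hfun, hasGradientAt_iff_hasFDerivAt]
  refine (hasFDerivAt_wsqAux c z).congr_fderiv ?_
  apply ContinuousLinearMap.ext
  intro w
  simp [InnerProductSpace.toDual_apply_apply, PiLp.inner_apply, ContinuousLinearMap.sum_apply,
    RCLike.inner_apply]; exact Finset.sum_congr rfl fun _ _ => mul_comm _ _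

private lemma gradF1Aux (k : ℕ) (ε : ℝ) (hε : 0 < ε) (z : EuclideanSpace ℝ (Fin n))
    (hB : 0 < ∑ i : Fin n, (if (i : ℕ) < k then 0 else z i ^ 2)) :
    HasGradientAt (fun w : EuclideanSpace ℝ (Fin n) =>
        Real.sqrt ((∑ i : Fin n, if (i : ℕ) < k then w i ^ 2 else 0) + ε) -
        Real.sqrt (∑ i : Fin n, if (i : ℕ) < k then 0 else w i ^ 2))
      (WithLp.toLp 2 (fun i => if (i : ℕ) < k
          then z i / Real.sqrt ((∑ j : Fin n, if (j : ℕ) < k then z j ^ 2 else 0) + ε)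
          else -(z i / Real.sqrt (∑ j : Fin n, if (j : ℕ) < k then 0 else z j ^ 2))
        : Fin n → ℝ) : EuclideanSpace ℝ (Fin n)) z := by
  set cA : Fin n → ℝ := fun i => if (i : ℕ) < k then 1 else 0 with hcA
  set cB : Fin n → ℝ := fun i => if (i : ℕ) < k then 0 else 1 with hcB
  have hAfun : ∀ w : EuclideanSpace ℝ (Fin n),
      (∑ i : Fin n, if (i : ℕ) < k then w i ^ 2 else 0) = ∑ i, cA i * w i ^ 2 := by
    intro w; exact Finset.sum_congr rfl fun i _ => by by_cases h : (i:ℕ) < k <;> simp [hcA, h]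
  have hBfun : ∀ w : EuclideanSpace ℝ (Fin n),
      (∑ i : Fin n, if (i : ℕ) < k then 0 else w i ^ 2) = ∑ i, cB i * w i ^ 2 := by
    intro w; exact Finset.sum_congr rfl fun i _ => by by_cases h : (i:ℕ) < k <;> simp [hcB, h]
  have hfun : (fun w : EuclideanSpace ℝ (Fin n) =>
        Real.sqrt ((∑ i : Fin n, if (i : ℕ) < k then w i ^ 2 else 0) + ε) -
        Real.sqrt (∑ i : Fin n, if (i : ℕ) < k then 0 else w i ^ 2))
      = fun w => Real.sqrt ((∑ i, cA i * w i ^ 2) + ε) -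
          Real.sqrt (∑ i, cB i * w i ^ 2) := by
    funext w; rw [hAfun, hBfun]
  rw [hfun]
  have hA0 : (0:ℝ) ≤ ∑ i, cA i * z i ^ 2 := by
    refine Finset.sum_nonneg fun i _ => ?_
    have : (0:ℝ) ≤ cA i := by simp [hcA]; split <;> norm_num
    positivity
  have hαpos : (0:ℝ) < (∑ i, cA i * z i ^ 2) + ε := by linarith
  have hβpos : (0:ℝ) < ∑ i, cB i * z i ^ 2 := by rw [← hBfun]; exact hB
  set α := (∑ i, cA i * z i ^ 2) + ε with hα
  set β := ∑ i, cB i * z i ^ 2 with hβ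
  have hsα : (0:ℝ) < Real.sqrt α := Real.sqrt_pos.2 hαpos
  have hsβ : (0:ℝ) < Real.sqrt β := Real.sqrt_pos.2 hβpos
  have hdA : HasFDerivAt (fun w : EuclideanSpace ℝ (Fin n) => (∑ i, cA i * w i ^ 2) + ε)
      (∑ i, (2 * cA i * z i) • (EuclideanSpace.proj i : EuclideanSpace ℝ (Fin n) →L[ℝ] ℝ)) z :=
    (hasFDerivAt_wsqAux cA z).add_const ε
  have hdB := hasFDerivAt_wsqAux cB z
  have hsqA : HasDerivAt Real.sqrt (1 / (2 * Real.sqrt α)) α :=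
    Real.hasDerivAt_sqrt (ne_of_gt hαpos)
  have hsqB : HasDerivAt Real.sqrt (1 / (2 * Real.sqrt β)) β :=
    Real.hasDerivAt_sqrt (ne_of_gt hβpos)
  have h1 := hsqA.comp_hasFDerivAt z hdA
  have h2 := hsqB.comp_hasFDerivAt z hdB
  have h3 := h1.sub h2
  rw [hasGradientAt_iff_hasFDerivAt]
  refine h3.congr_fderiv ?_
  apply ContinuousLinearMap.ext
  intro w
  rw [show (WithLp.toLp 2 (fun i => if (i : ℕ) < k
          then z i / Real.sqrt ((∑ j : Fin n, if (j : ℕ) < k then z j ^ 2 else 0) + ε)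
          else -(z i / Real.sqrt (∑ j : Fin n, if (j : ℕ) < k then 0 else z j ^ 2))
        : Fin n → ℝ) : EuclideanSpace ℝ (Fin n))
      = (WithLp.toLp 2 (fun i => if (i : ℕ) < k then z i / Real.sqrt α else -(z i / Real.sqrt β)
        : Fin n → ℝ) : EuclideanSpace ℝ (Fin n)) from by
    congr 1; funext i; rw [hAfun z, hBfun z, ← hα, ← hβ]]
  simp only [ContinuousLinearMap.sub_apply, ContinuousLinearMap.smul_apply,
    ContinuousLinearMap.sum_apply, smul_eq_mul, InnerProductSpace.toDual_apply_apply,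
    PiLp.inner_apply, RCLike.inner_apply, starRingEnd_apply, star_trivial, EuclideanSpace.coe_proj]
  rw [Finset.mul_sum, Finset.mul_sum, ← Finset.sum_sub_distrib]
  refine Finset.sum_congr rfl fun i _ => ?_
  by_cases hik : (i : ℕ) < k
  · simp only [hik, if_true, hcA, hcB]
    field_simp
    ring
  · simp only [hik, if_false, hcA, hcB]
    field_simp
    ring

private lemma sigmaSumAux (k : ℕ) (z : EuclideanSpace ℝ (Fin n)) :
    ∑ i : Fin n, (if (i : ℕ) < k then (1:ℝ) else -1) * z i * z i
      = (∑ i : Fin n, if (i : ℕ) < k then z i ^ 2 else 0)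
        - (∑ i : Fin n, if (i : ℕ) < k then 0 else z i ^ 2) := by
  rw [← Finset.sum_sub_distrib]
  exact Finset.sum_congr rfl fun i _ => by by_cases h : (i : ℕ) < k <;> simp [h] <;> ring

private lemma keyAux (k : ℕ) (ε t : ℝ) (hε : 0 < ε) (htneg : t < 0)
    (z : EuclideanSpace ℝ (Fin n))
    (hBz : 0 < ∑ i : Fin n, (if (i : ℕ) < k then 0 else z i ^ 2))
    (hft : Real.sqrt ((∑ i : Fin n, if (i : ℕ) < k then z i ^ 2 else 0) + ε)
        - Real.sqrt (∑ i : Fin n, if (i : ℕ) < k then 0 else z i ^ 2) = t)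
    (y : EuclideanSpace ℝ (Fin n))
    (hy : ∀ i : Fin n, y i = if (i : ℕ) < k then z i
      else ((Real.sqrt (∑ j : Fin n, if (j : ℕ) < k then 0 else z j ^ 2) + t)
        / Real.sqrt (∑ j : Fin n, if (j : ℕ) < k then 0 else z j ^ 2)) * z i) :
    ∃ g : EuclideanSpace ℝ (Fin n),
      HasGradientAt (fun w : EuclideanSpace ℝ (Fin n) =>
        Real.sqrt ((∑ i : Fin n, if (i : ℕ) < k then w i ^ 2 else 0) + ε) -
        Real.sqrt (∑ i : Fin n, if (i : ℕ) < k then 0 else w i ^ 2)) g z ∧ g ≠ 0 ∧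
      (∃ μ : ℝ, 0 < μ ∧
        ∀ i : Fin n, g i = μ * (2 * (if (i : ℕ) < k then (1:ℝ) else -1) * y i)) ∧
      (∑ i : Fin n, (if (i : ℕ) < k then (1:ℝ) else -1) * y i * y i) = -ε := by
  have hA0 : (0:ℝ) ≤ ∑ i : Fin n, (if (i : ℕ) < k then z i ^ 2 else 0) :=
    Finset.sum_nonneg fun i _ => by split <;> positivity
  set A := ∑ i : Fin n, (if (i : ℕ) < k then z i ^ 2 else 0) with hA
  set B := ∑ i : Fin n, (if (i : ℕ) < k then 0 else z i ^ 2) with hB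
  set sα := Real.sqrt (A + ε) with hsadef
  set sβ := Real.sqrt B with hsbdef
  have hαpos : (0:ℝ) < A + ε := by linarith
  have hsα : 0 < sα := Real.sqrt_pos.2 hαpos
  have hsβ : 0 < sβ := Real.sqrt_pos.2 hBz
  have hsα2 : sα ^ 2 = A + ε := Real.sq_sqrt hαpos.le
  have hsβ2 : sβ ^ 2 = B := Real.sq_sqrt hBz.le
  have hsum : sα = sβ + t := by linarith [hft]
  refine ⟨(WithLp.toLp 2 (fun i => if (i : ℕ) < k then z i / sα else -(z i / sβ)
      : Fin n → ℝ) : EuclideanSpace ℝ (Fin n)), gradF1Aux k ε hε z hBz, ?_, ?_, ?_⟩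
  · -- nonzero
    have hex : ∃ i : Fin n, (if (i : ℕ) < k then (0:ℝ) else z i ^ 2) ≠ 0 := by
      by_contra hcon
      push_neg at hcon
      rw [show B = 0 from Finset.sum_eq_zero fun i _ => hcon i] at hBz
      exact lt_irrefl 0 hBz
    obtain ⟨i, hi⟩ := hex
    have hik : ¬ (i : ℕ) < k := by intro h; simp [h] at hi
    have hzi : z i ≠ 0 := by
      intro h0; apply hi; simp [hik, h0]
    intro h0
    have : (if (i : ℕ) < k then z i / sα else -(z i / sβ)) = 0 := by
      have := congrArg (fun v : EuclideanSpace ℝ (Fin n) => v i) h0; exact this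
    rw [if_neg hik] at this
    have : z i / sβ = 0 := by linarith [this]
    exact hzi (by field_simp at this; simpa using this)
  · -- proportionality
    refine ⟨1 / (2 * sα), by positivity, fun i => ?_⟩
    by_cases hik : (i : ℕ) < k
    · rw [hy i, if_pos hik]
      simp only [hik, if_true]
      field_simp
    · rw [hy i, if_neg hik]
      simp only [hik, if_false]
      rw [show sβ + t = sα from hsum.symm]
      field_simp
  · -- Q y = -ε
    rw [sigmaSumAux k y]
    have hAy : (∑ i : Fin n, if (i : ℕ) < k then y i ^ 2 else 0) = A := by
      refine Finset.sum_congr rfl fun i _ => ?_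
      by_cases hik : (i : ℕ) < k
      · rw [if_pos hik, if_pos hik, hy i, if_pos hik]
      · rw [if_neg hik, if_neg hik]
    have hBy : (∑ i : Fin n, if (i : ℕ) < k then 0 else y i ^ 2)
        = ((sβ + t) / sβ) ^ 2 * B := by
      rw [hB, Finset.mul_sum]
      refine Finset.sum_congr rfl fun i _ => ?_
      by_cases hik : (i : ℕ) < k
      · rw [if_pos hik, if_pos hik, mul_zero]
      · rw [if_neg hik, if_neg hik, hy i, if_neg hik]
        ring
    rw [hAy, hBy]
    have : ((sβ + t) / sβ) ^ 2 * B = (sβ + t) ^ 2 := by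
      rw [← hsβ2]; field_simp
    rw [this, ← hsum, hsα2]
    ring

private lemma normSmulAux (μ : ℝ) (hμ : 0 < μ) (h : EuclideanSpace ℝ (Fin n)) :
    ‖μ • h‖⁻¹ • (μ • h) = ‖h‖⁻¹ • h := by
  rw [norm_smul, Real.norm_eq_abs, abs_of_pos hμ, mul_inv, smul_smul]
  congr 1
  field_simp

/-- Let `Q(x) = Σ_{i<k} x_i² − Σ_{k≤i<n} x_i²` on `ℝⁿ` (`n = k+l`), `a = √(Σ_{i<k} x_i²)`,
`b = √(Σ_{k≤i<n} x_i²)`, `ε > 0`, and `f₁ = √(a² + ε) − b`.  For a point `x` with `b > 0`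
and `f₁(x) = t < 0`, the differential (gradient) of `f₁` at `x` is proportional, with a
positive factor, to the differential of `Q` at `y = (x₁,…,x_k, λx_{k+1},…,λx_n)` where
`λ = (b+t)/b`; moreover `Q(y) = −ε`.  In particular the Gauss image of the level set
`{f₁ = t}` equals the Gauss image of `{Q = −ε}`. -/
theorem level_sets_of_f_and_Q (k l : ℕ) (hk : 0 < k) (hl : 0 < l) (ε : ℝ) (hε : 0 < ε)
    (Q : EuclideanSpace ℝ (Fin (k + l)) → ℝ)
    (hQ : ∀ z, Q z = ∑ i : Fin (k + l), (if (i : ℕ) < k then (1 : ℝ) else -1) * z i * z i)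
    (f₁ : EuclideanSpace ℝ (Fin (k + l)) → ℝ)
    (hf₁ : ∀ z, f₁ z =
      Real.sqrt ((∑ i : Fin (k + l), if (i : ℕ) < k then z i ^ 2 else 0) + ε) -
      Real.sqrt (∑ i : Fin (k + l), if (i : ℕ) < k then 0 else z i ^ 2))
    (x : EuclideanSpace ℝ (Fin (k + l)))
    (a b : ℝ)
    (ha : a = Real.sqrt (∑ i : Fin (k + l), if (i : ℕ) < k then x i ^ 2 else 0))
    (hb : b = Real.sqrt (∑ i : Fin (k + l), if (i : ℕ) < k then 0 else x i ^ 2))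
    (hb0 : 0 < b)
    (t : ℝ) (ht : t = f₁ x) (htneg : t < 0)
    (y : EuclideanSpace ℝ (Fin (k + l)))
    (hy : ∀ i : Fin (k + l), y i = if (i : ℕ) < k then x i else ((b + t) / b) * x i) :
    (∃ g : EuclideanSpace ℝ (Fin (k + l)), HasGradientAt f₁ g x ∧
      ∃ μ : ℝ, 0 < μ ∧
        ∀ i : Fin (k + l), g i = μ * (2 * (if (i : ℕ) < k then (1 : ℝ) else -1) * y i)) ∧
    Q y = -ε ∧
    {v : EuclideanSpace ℝ (Fin (k + l)) | ∃ z, f₁ z = t ∧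
        ∃ g, HasGradientAt f₁ g z ∧ g ≠ 0 ∧ v = ‖g‖⁻¹ • g} =
      {v : EuclideanSpace ℝ (Fin (k + l)) | ∃ z, Q z = -ε ∧
        ∃ g, HasGradientAt Q g z ∧ g ≠ 0 ∧ v = ‖g‖⁻¹ • g} := by
  have hfneq : f₁ = fun w : EuclideanSpace ℝ (Fin (k + l)) =>
      Real.sqrt ((∑ i : Fin (k + l), if (i : ℕ) < k then w i ^ 2 else 0) + ε) -
      Real.sqrt (∑ i : Fin (k + l), if (i : ℕ) < k then 0 else w i ^ 2) := funext hf₁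
  have hQeq : Q = fun w : EuclideanSpace ℝ (Fin (k + l)) =>
      ∑ i : Fin (k + l), (if (i : ℕ) < k then (1 : ℝ) else -1) * w i * w i := funext hQ
  have hBx : 0 < ∑ i : Fin (k + l), (if (i : ℕ) < k then 0 else x i ^ 2) :=
    Real.sqrt_pos.1 (hb ▸ hb0)
  have hft : Real.sqrt ((∑ i : Fin (k + l), if (i : ℕ) < k then x i ^ 2 else 0) + ε)
      - Real.sqrt (∑ i : Fin (k + l), if (i : ℕ) < k then 0 else x i ^ 2) = t := by
    rw [ht, hf₁ x]
  have hy' : ∀ i : Fin (k + l), y i = if (i : ℕ) < k then x i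
      else ((Real.sqrt (∑ j : Fin (k + l), if (j : ℕ) < k then 0 else x j ^ 2) + t)
        / Real.sqrt (∑ j : Fin (k + l), if (j : ℕ) < k then 0 else x j ^ 2)) * x i := by
    intro i; rw [hy i, hb]
  obtain ⟨g, hg, hgne, ⟨μ, hμ, hgi⟩, hQy⟩ := keyAux k ε t hε htneg x hBx hft y hy'
  refine ⟨⟨g, by rw [hfneq]; exact hg, μ, hμ, hgi⟩, by rw [hQ y]; exact hQy, ?_⟩
  ext v
  simp only [Set.mem_setOf_eq]
  constructor
  · rintro ⟨z, hz, g₂, hg₂, hg₂ne, rfl⟩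
    rw [hf₁ z] at hz
    have hsβ : 0 < Real.sqrt (∑ i : Fin (k + l), if (i : ℕ) < k then 0 else z i ^ 2) := by
      have h0 := Real.sqrt_nonneg
        ((∑ i : Fin (k + l), if (i : ℕ) < k then z i ^ 2 else 0) + ε)
      linarith
    have hBzpos : 0 < ∑ i : Fin (k + l), (if (i : ℕ) < k then 0 else z i ^ 2) :=
      Real.sqrt_pos.1 hsβ
    set sβ := Real.sqrt (∑ j : Fin (k + l), if (j : ℕ) < k then 0 else z j ^ 2) with hsb
    set y₂ : EuclideanSpace ℝ (Fin (k + l)) :=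
      (WithLp.toLp 2 (fun i => if (i : ℕ) < k then z i else ((sβ + t) / sβ) * z i
        : Fin (k + l) → ℝ) : EuclideanSpace ℝ (Fin (k + l))) with hy₂
    obtain ⟨g₃, hg₃, hg₃ne, ⟨ν, hν, hgi₃⟩, hQy₂⟩ :=
      keyAux k ε t hε htneg z hBzpos hz y₂ (fun i => rfl)
    rw [hfneq] at hg₂
    have hg₂eq : g₂ = g₃ := hg₂.unique hg₃
    set h : EuclideanSpace ℝ (Fin (k + l)) :=
      (WithLp.toLp 2 (fun i => 2 * (if (i : ℕ) < k then (1:ℝ) else -1) * y₂ i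
        : Fin (k + l) → ℝ) : EuclideanSpace ℝ (Fin (k + l))) with hh
    have hgrQ : HasGradientAt Q h y₂ := by
      rw [hQeq]
      exact hasGradientAt_wsqAux (fun i => if (i : ℕ) < k then (1:ℝ) else -1) y₂
    have hg₃h : g₃ = ν • h := by
      ext i
      rw [PiLp.smul_apply, smul_eq_mul]
      exact hgi₃ i
    have hne : h ≠ 0 := by
      intro h0; exact hg₃ne (by rw [hg₃h, h0, smul_zero])
    refine ⟨y₂, by rw [hQ y₂]; exact hQy₂, h, hgrQ, hne, ?_⟩
    rw [hg₂eq, hg₃h, normSmulAux ν hν h]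
  · rintro ⟨z, hz, g₂, hg₂, hg₂ne, rfl⟩
    rw [hQ z, sigmaSumAux k z] at hz
    have hA0 : (0:ℝ) ≤ ∑ i : Fin (k + l), (if (i : ℕ) < k then z i ^ 2 else 0) :=
      Finset.sum_nonneg fun i _ => by split <;> positivity
    have hBz : (∑ i : Fin (k + l), if (i : ℕ) < k then 0 else z i ^ 2)
        = (∑ i : Fin (k + l), if (i : ℕ) < k then z i ^ 2 else 0) + ε := by linarith
    have hBzpos : 0 < ∑ i : Fin (k + l), (if (i : ℕ) < k then 0 else z i ^ 2) := by
      rw [hBz]; linarith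
    set sβ := Real.sqrt (∑ j : Fin (k + l), if (j : ℕ) < k then 0 else z j ^ 2) with hsb
    have hsβ : 0 < sβ := Real.sqrt_pos.2 hBzpos
    have hsβ2 : sβ ^ 2 = ∑ i : Fin (k + l), (if (i : ℕ) < k then 0 else z i ^ 2) :=
      Real.sq_sqrt hBzpos.le
    set w : EuclideanSpace ℝ (Fin (k + l)) :=
      (WithLp.toLp 2 (fun i => if (i : ℕ) < k then z i else ((sβ - t) / sβ) * z i
        : Fin (k + l) → ℝ) : EuclideanSpace ℝ (Fin (k + l))) with hw
    have hst : 0 < sβ - t := by linarith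
    have hAw : (∑ i : Fin (k + l), if (i : ℕ) < k then w i ^ 2 else 0)
        = ∑ i : Fin (k + l), (if (i : ℕ) < k then z i ^ 2 else 0) := by
      refine Finset.sum_congr rfl fun i _ => ?_
      by_cases hik : (i : ℕ) < k
      · rw [if_pos hik, if_pos hik, hw]
        simp [hik]
      · rw [if_neg hik, if_neg hik]
    have hBw : (∑ i : Fin (k + l), if (i : ℕ) < k then 0 else w i ^ 2)
        = (sβ - t) ^ 2 := by
      have step : (∑ i : Fin (k + l), if (i : ℕ) < k then 0 else w i ^ 2)
          = ((sβ - t) / sβ) ^ 2 * ∑ i : Fin (k + l), (if (i : ℕ) < k then 0 else z i ^ 2) := by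
        rw [Finset.mul_sum]
        refine Finset.sum_congr rfl fun i _ => ?_
        by_cases hik : (i : ℕ) < k
        · rw [if_pos hik, if_pos hik, mul_zero]
        · rw [if_neg hik, if_neg hik, hw]
          simp only [hik, if_false]
          ring
      rw [step, ← hsβ2]
      field_simp
    have hsBw : Real.sqrt (∑ i : Fin (k + l), if (i : ℕ) < k then 0 else w i ^ 2)
        = sβ - t := by rw [hBw, Real.sqrt_sq hst.le]
    have hfw : Real.sqrt ((∑ i : Fin (k + l), if (i : ℕ) < k then w i ^ 2 else 0) + ε)
        - Real.sqrt (∑ i : Fin (k + l), if (i : ℕ) < k then 0 else w i ^ 2) = t := by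
      rw [hAw, hsBw, show (∑ i : Fin (k + l), (if (i : ℕ) < k then z i ^ 2 else 0)) + ε
        = ∑ i : Fin (k + l), (if (i : ℕ) < k then 0 else z i ^ 2) from hBz.symm, ← hsb]
      ring
    have hBwpos : 0 < ∑ i : Fin (k + l), (if (i : ℕ) < k then 0 else w i ^ 2) := by
      rw [hBw]; positivity
    have hyw : ∀ i : Fin (k + l), z i = if (i : ℕ) < k then w i
        else ((Real.sqrt (∑ j : Fin (k + l), if (j : ℕ) < k then 0 else w j ^ 2) + t)
          / Real.sqrt (∑ j : Fin (k + l), if (j : ℕ) < k then 0 else w j ^ 2)) * w i := by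
      intro i
      rw [hsBw]
      by_cases hik : (i : ℕ) < k
      · rw [if_pos hik, hw]; simp [hik]
      · rw [if_neg hik, hw]
        simp only [hik, if_false]
        field_simp
        ring
    obtain ⟨g₃, hg₃, hg₃ne, ⟨ν, hν, hgi₃⟩, _⟩ :=
      keyAux k ε t hε htneg w hBwpos hfw z hyw
    rw [hQeq] at hg₂
    have hg₂eq : g₂ = (WithLp.toLp 2 (fun i => 2 * (if (i : ℕ) < k then (1:ℝ) else -1) * z i
        : Fin (k + l) → ℝ) : EuclideanSpace ℝ (Fin (k + l))) :=
      hg₂.unique (hasGradientAt_wsqAux _ z)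
    have hg₃g₂ : g₃ = ν • g₂ := by
      ext i
      rw [hg₂eq, PiLp.smul_apply, smul_eq_mul]
      exact hgi₃ i
    refine ⟨w, by rw [hf₁ w]; exact hfw, g₃, by rw [hfneq]; exact hg₃, hg₃ne, ?_⟩
    rw [hg₃g₂, normSmulAux ν hν g₂]
end

section
/- Let Q(x) = Σ_{i=1}^k x_i² − Σ_{j=1}^l x_{k+j}² and let M ⊂ ℝⁿ be a smooth connected hypersurface with dist(x, {Q = 0}) → 0 as x → ∞ along M, and whose Gauss image is disjoint from the Gauss image of {Q = −1}. Then M ∩ {Q < 0} = ∅. -/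
open InnerProductSpace

lemma wsum_hasStrictFDerivAt {n : ℕ} (w : Fin n → ℝ) (x : EuclideanSpace ℝ (Fin n)) :
    HasStrictFDerivAt (fun y : EuclideanSpace ℝ (Fin n) => ∑ i, w i * y i * y i)
      (toDual ℝ (EuclideanSpace ℝ (Fin n)) (WithLp.toLp 2 (fun i => 2 * w i * x i))) x := by
  have h : ∀ i : Fin n, HasStrictFDerivAt (fun y : EuclideanSpace ℝ (Fin n) => w i * y i * y i)
      ((w i) • ((x i) • (PiLp.proj 2 (fun _ : Fin n => ℝ) i) +
        (x i) • (PiLp.proj 2 (fun _ : Fin n => ℝ) i) :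
        EuclideanSpace ℝ (Fin n) →L[ℝ] ℝ)) x := by
    intro i
    have hp := (PiLp.proj (𝕜 := ℝ) 2 (fun _ : Fin n => ℝ) i).hasStrictFDerivAt (x := x)
    simpa [mul_assoc, PiLp.proj_apply] using (hp.mul hp).const_mul (w i)
  have hsum := HasStrictFDerivAt.sum (fun i (_ : i ∈ Finset.univ) => h i)
  refine HasStrictFDerivAt.congr_fderiv (by simpa only [Finset.sum_fn] using hsum) ?_
  ext y
  simp [toDual_apply_apply, PiLp.inner_apply, RCLike.inner_apply, ContinuousLinearMap.sum_apply,
    PiLp.proj_apply, smul_eq_mul]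
  exact Finset.sum_congr rfl fun i _ => by ring

lemma wsum_hasGradientAt {n : ℕ} (w : Fin n → ℝ) (x : EuclideanSpace ℝ (Fin n)) :
    HasGradientAt (fun y : EuclideanSpace ℝ (Fin n) => ∑ i, w i * y i * y i)
      (WithLp.toLp 2 (fun i => 2 * w i * x i)) x :=
  hasGradientAt_iff_hasFDerivAt.mpr (wsum_hasStrictFDerivAt w x).hasFDerivAt

/-- "Lipschitz" bound for the square root of a 0/1-weighted sum of squares. -/
lemma sqrt_wsum_lip {n : ℕ} (w : Fin n → ℝ) (hw : ∀ i, w i = 0 ∨ w i = 1)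
    (x z : EuclideanSpace ℝ (Fin n)) :
    Real.sqrt (∑ i, w i * x i * x i) ≤ Real.sqrt (∑ i, w i * z i * z i) + ‖x - z‖ := by
  set P : EuclideanSpace ℝ (Fin n) → EuclideanSpace ℝ (Fin n) :=
    fun y => WithLp.toLp 2 (fun i => w i * y i) with hP
  have hnorm : ∀ y : EuclideanSpace ℝ (Fin n), ‖P y‖ = Real.sqrt (∑ i, w i * y i * y i) := by
    intro y
    rw [EuclideanSpace.norm_eq]
    congr 1
    refine Finset.sum_congr rfl fun i _ => ?_
    rcases hw i with h | h <;> simp [hP, h, Real.norm_eq_abs, sq_abs, sq]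
  have hsub : P x - P z = P (x - z) := by
    ext i
    simp only [hP, PiLp.sub_apply, PiLp.toLp_apply]
    ring
  have hle : ‖P (x - z)‖ ≤ ‖x - z‖ := by
    rw [hnorm, EuclideanSpace.norm_eq]
    apply Real.sqrt_le_sqrt
    refine Finset.sum_le_sum fun i _ => ?_
    rcases hw i with h | h <;>
      simp [h, Real.norm_eq_abs, sq_abs, sq, mul_self_nonneg]
  calc Real.sqrt (∑ i, w i * x i * x i) = ‖P x‖ := (hnorm x).symm
    _ = ‖P z + (P x - P z)‖ := by rw [add_sub_cancel]
    _ ≤ ‖P z‖ + ‖P x - P z‖ := norm_add_le _ _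
    _ ≤ Real.sqrt (∑ i, w i * z i * z i) + ‖x - z‖ := by
        rw [hnorm, hsub]; exact add_le_add (le_refl _) hle

/-- Let `Q(x) = Σ_{i<k} x_i² − Σ_{k≤i<n} x_i²` on `ℝⁿ` (`n = k+l`, `k, l ≥ 1`) and let
`M = {F = 0}` be a smooth connected hypersurface (a regular level set of a smooth `F`,
hence closed, without boundary) with `dist(x, {Q = 0}) → 0` as `x → ∞` along `M`, and whose
Gauss image (set of unit normals `∇F/‖∇F‖`) is disjoint from the Gauss image of `{Q = −1}`.
Then `M ∩ {Q < 0} = ∅`. -/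
theorem M_outside_cone (k l : ℕ) (hk : 0 < k) (hl : 0 < l)
    (Q : EuclideanSpace ℝ (Fin (k + l)) → ℝ)
    (hQ : ∀ z, Q z = ∑ i : Fin (k + l), (if (i : ℕ) < k then (1 : ℝ) else -1) * z i * z i)
    (gQ : EuclideanSpace ℝ (Fin (k + l)) → EuclideanSpace ℝ (Fin (k + l)))
    (hgQ : ∀ z, HasGradientAt Q (gQ z) z)
    (F : EuclideanSpace ℝ (Fin (k + l)) → ℝ) (hF : ContDiff ℝ (⊤ : ℕ∞) F)
    (gF : EuclideanSpace ℝ (Fin (k + l)) → EuclideanSpace ℝ (Fin (k + l)))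
    (hgF : ∀ x, HasGradientAt F (gF x) x)
    (M : Set (EuclideanSpace ℝ (Fin (k + l)))) (hM : M = {x | F x = 0})
    (hreg : ∀ x ∈ M, gF x ≠ 0)
    (hconn : IsConnected M)
    (hinf : ∀ δ > 0, ∃ R : ℝ, ∀ x ∈ M, R < ‖x‖ →
      Metric.infDist x {z : EuclideanSpace ℝ (Fin (k + l)) | Q z = 0} < δ)
    (hGauss : ∀ x ∈ M, ∀ z, Q z = -1 → ‖gF x‖⁻¹ • gF x ≠ ‖gQ z‖⁻¹ • gQ z) :
    ∀ x ∈ M, ¬ Q x < 0 := by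
  intro x₀ hx₀ hneg
  classical
  obtain ⟨wa, hwa⟩ : ∃ wa : Fin (k + l) → ℝ, ∀ i, wa i = if (i : ℕ) < k then 1 else 0 :=
    ⟨fun i => if (i : ℕ) < k then 1 else 0, fun _ => rfl⟩
  obtain ⟨wb, hwb⟩ : ∃ wb : Fin (k + l) → ℝ, ∀ i, wb i = if (i : ℕ) < k then 0 else 1 :=
    ⟨fun i => if (i : ℕ) < k then 0 else 1, fun _ => rfl⟩
  have hwa01 : ∀ i, wa i = 0 ∨ wa i = 1 := fun i => by
    rw [hwa i]; by_cases h : (i:ℕ) < k <;> simp [h]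
  have hwb01 : ∀ i, wb i = 0 ∨ wb i = 1 := fun i => by
    rw [hwb i]; by_cases h : (i:ℕ) < k <;> simp [h]
  obtain ⟨A, hA⟩ : ∃ A : EuclideanSpace ℝ (Fin (k + l)) → ℝ,
      A = fun x => ∑ i, wa i * x i * x i := ⟨fun x => ∑ i, wa i * x i * x i, rfl⟩
  obtain ⟨B, hB⟩ : ∃ B : EuclideanSpace ℝ (Fin (k + l)) → ℝ,
      B = fun x => ∑ i, wb i * x i * x i := ⟨fun x => ∑ i, wb i * x i * x i, rfl⟩
  have hA0 : ∀ x, 0 ≤ A x := by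
    intro x
    rw [hA]
    refine Finset.sum_nonneg fun i _ => ?_
    rcases hwa01 i with h | h <;> simp [h, mul_assoc, mul_self_nonneg]
  have hB0 : ∀ x, 0 ≤ B x := by
    intro x
    rw [hB]
    refine Finset.sum_nonneg fun i _ => ?_
    rcases hwb01 i with h | h <;> simp [h, mul_assoc, mul_self_nonneg]
  have hQAB : ∀ x, Q x = A x - B x := by
    intro x
    rw [hQ, hA, hB, ← Finset.sum_sub_distrib]
    refine Finset.sum_congr rfl fun i _ => ?_
    by_cases h : (i : ℕ) < k <;> simp [hwa, hwb, h] <;> ring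
  obtain ⟨ε2, hε2def⟩ : ∃ e : ℝ, e = -Q x₀ / 2 := ⟨-Q x₀ / 2, rfl⟩
  have hε2 : 0 < ε2 := by rw [hε2def]; linarith
  obtain ⟨φ, hφ⟩ : ∃ φ : EuclideanSpace ℝ (Fin (k + l)) → ℝ,
      φ = fun x => Real.sqrt (B x) - Real.sqrt (A x + ε2) :=
    ⟨fun x => Real.sqrt (B x) - Real.sqrt (A x + ε2), rfl⟩
  have hφ₀ : 0 < φ x₀ := by
    have hBx₀ : B x₀ = A x₀ + 2 * ε2 := by
      have h1 := hQAB x₀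
      rw [hε2def]; linarith
    have h2 : Real.sqrt (A x₀ + ε2) < Real.sqrt (B x₀) := by
      rw [hBx₀]
      exact Real.sqrt_lt_sqrt (by have := hA0 x₀; linarith) (by linarith)
    simp only [hφ]
    linarith
  -- comparison with the distance to the cone
  have hup : ∀ x z : EuclideanSpace ℝ (Fin (k + l)), Q z = 0 → φ x ≤ 2 * dist x z := by
    intro x z hz
    have h1 : A z = B z := by have := hQAB z; linarith
    have h2 : Real.sqrt (B x) ≤ Real.sqrt (B z) + ‖x - z‖ := by
      rw [hB]; exact sqrt_wsum_lip wb hwb01 x z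
    have h3 : Real.sqrt (A z) ≤ Real.sqrt (A x) + ‖z - x‖ := by
      rw [hA]; exact sqrt_wsum_lip wa hwa01 z x
    rw [norm_sub_rev] at h3
    have h4 : Real.sqrt (A x) ≤ Real.sqrt (A x + ε2) := Real.sqrt_le_sqrt (by linarith)
    have h5 : Real.sqrt (A z) = Real.sqrt (B z) := by rw [h1]
    simp only [hφ]
    rw [dist_eq_norm]
    linarith
  have hconeN : ({z : EuclideanSpace ℝ (Fin (k + l)) | Q z = 0} : Set _).Nonempty := by
    refine ⟨0, ?_⟩
    show Q 0 = 0
    rw [hQ]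
    apply Finset.sum_eq_zero
    intro i _
    have : (0 : EuclideanSpace ℝ (Fin (k + l))) i = 0 := rfl
    rw [this]; ring
  have hfar : ∀ x ∈ M,
      Metric.infDist x {z : EuclideanSpace ℝ (Fin (k + l)) | Q z = 0} < φ x₀ / 4 →
      φ x ≤ φ x₀ / 2 := by
    intro x _ hx
    obtain ⟨z, hz, hdz⟩ := (Metric.infDist_lt_iff hconeN).mp hx
    have := hup x z hz
    linarith
  obtain ⟨R, hR⟩ := hinf (φ x₀ / 4) (by linarith)
  obtain ⟨R₁, hR₁⟩ : ∃ r : ℝ, r = max R ‖x₀‖ := ⟨max R ‖x₀‖, rfl⟩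
  have hMc : IsClosed M := by rw [hM]; exact isClosed_eq hF.continuous continuous_const
  have hK : IsCompact (M ∩ Metric.closedBall 0 R₁) :=
    (isCompact_closedBall 0 R₁).inter_left hMc
  have hx₀K : x₀ ∈ M ∩ Metric.closedBall 0 R₁ := by
    refine ⟨hx₀, ?_⟩
    rw [Metric.mem_closedBall, dist_zero_right, hR₁]
    exact le_max_right _ _
  have hφc : Continuous φ := by
    have hcoord : ∀ i : Fin (k + l),
        Continuous fun x : EuclideanSpace ℝ (Fin (k + l)) => x i := fun i => (continuous_apply i).comp (PiLp.continuous_ofLp 2 _)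
    have hcA : Continuous A := by
      rw [hA]
      exact continuous_finset_sum _ fun i _ => (continuous_const.mul (hcoord i)).mul (hcoord i)
    have hcB : Continuous B := by
      rw [hB]
      exact continuous_finset_sum _ fun i _ => (continuous_const.mul (hcoord i)).mul (hcoord i)
    rw [hφ]
    exact (Real.continuous_sqrt.comp hcB).sub
      (Real.continuous_sqrt.comp (hcA.add continuous_const))
  obtain ⟨xm, hxmK, hmax⟩ := hK.exists_isMaxOn ⟨x₀, hx₀K⟩ hφc.continuousOn
  have hxmM : xm ∈ M := hxmK.1
  have hφxm : φ x₀ ≤ φ xm := isMaxOn_iff.mp hmax x₀ hx₀K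
  have hglob : IsMaxOn φ M xm := by
    rw [isMaxOn_iff]
    intro y hy
    by_cases hyR : ‖y‖ ≤ R₁
    · refine isMaxOn_iff.mp hmax y ⟨hy, ?_⟩
      rw [Metric.mem_closedBall, dist_zero_right]; exact hyR
    · push_neg at hyR
      have h1 := hfar y hy (hR y hy (lt_of_le_of_lt (le_trans (le_max_left R ‖x₀‖) hR₁.ge) hyR))
      linarith
  -- positivity at the max point
  have hφm : 0 < φ xm := lt_of_lt_of_le hφ₀ hφxm
  have hAε : 0 < A xm + ε2 := by have := hA0 xm; linarith
  have hsB : 0 < Real.sqrt (B xm) := by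
    have h1 : Real.sqrt (A xm + ε2) < Real.sqrt (B xm) := by
      have h2 : φ xm = Real.sqrt (B xm) - Real.sqrt (A xm + ε2) := by rw [hφ]
      linarith
    exact lt_of_le_of_lt (Real.sqrt_nonneg _) h1
  have hBm : 0 < B xm := Real.sqrt_pos.mp hsB
  -- strict derivatives at xm
  have hFs : HasStrictFDerivAt F (toDual ℝ (EuclideanSpace ℝ (Fin (k + l))) (gF xm)) xm := by
    have h1 := (hF.contDiffAt (x := xm)).hasStrictFDerivAt (by simp)
    have h2 : fderiv ℝ F xm = toDual ℝ (EuclideanSpace ℝ (Fin (k + l))) (gF xm) :=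
      (hasGradientAt_iff_hasFDerivAt.mp (hgF xm)).fderiv
    rwa [h2] at h1
  obtain ⟨vA, hvA⟩ : ∃ vA : EuclideanSpace ℝ (Fin (k + l)),
      vA = WithLp.toLp 2 (fun i => 2 * wa i * xm i) := ⟨WithLp.toLp 2 (fun i => 2 * wa i * xm i), rfl⟩
  obtain ⟨vB, hvB⟩ : ∃ vB : EuclideanSpace ℝ (Fin (k + l)),
      vB = WithLp.toLp 2 (fun i => 2 * wb i * xm i) := ⟨WithLp.toLp 2 (fun i => 2 * wb i * xm i), rfl⟩
  have hAs : HasStrictFDerivAt A (toDual ℝ (EuclideanSpace ℝ (Fin (k + l))) vA) xm := by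
    rw [hA, hvA]; exact wsum_hasStrictFDerivAt wa xm
  have hBs : HasStrictFDerivAt B (toDual ℝ (EuclideanSpace ℝ (Fin (k + l))) vB) xm := by
    rw [hB, hvB]; exact wsum_hasStrictFDerivAt wb xm
  obtain ⟨v, hv⟩ : ∃ v : EuclideanSpace ℝ (Fin (k + l)),
      v = (1 / (2 * Real.sqrt (B xm))) • vB - (1 / (2 * Real.sqrt (A xm + ε2))) • vA :=
    ⟨(1 / (2 * Real.sqrt (B xm))) • vB - (1 / (2 * Real.sqrt (A xm + ε2))) • vA, rfl⟩
  have hφs : HasStrictFDerivAt φ (toDual ℝ (EuclideanSpace ℝ (Fin (k + l))) v) xm := by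
    have h1 := (hBs.sqrt hBm.ne').sub ((hAs.add_const ε2).sqrt hAε.ne')
    have h2 : ((1 / (2 * Real.sqrt (B xm))) • toDual ℝ (EuclideanSpace ℝ (Fin (k + l))) vB -
        (1 / (2 * Real.sqrt (A xm + ε2))) • toDual ℝ (EuclideanSpace ℝ (Fin (k + l))) vA)
        = toDual ℝ (EuclideanSpace ℝ (Fin (k + l))) v := by
      rw [hv, map_sub, map_smul, map_smul]
    rw [hφ, ← h2]
    exact h1
  -- Lagrange multipliers
  have hFxm : F xm = 0 := by rw [hM] at hxmM; exact hxmM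
  have hext : IsLocalExtrOn φ {x | F x = F xm} xm := by
    have hset : {x | F x = F xm} = M := by rw [hFxm, hM]
    rw [hset]
    exact Or.inr hglob.localize
  obtain ⟨α, β, hab, heq⟩ := hext.exists_multipliers_of_hasStrictFDerivAt_1d hFs hφs
  have hvec : α • gF xm + β • v = 0 := by
    apply (toDual ℝ (EuclideanSpace ℝ (Fin (k + l)))).injective
    rw [map_add, map_smul, map_smul, map_zero]
    exact heq
  -- a nonvanishing coordinate in the second block
  obtain ⟨i0, hi0k, hxi0⟩ : ∃ i0 : Fin (k + l), ¬ ((i0 : ℕ) < k) ∧ xm i0 ≠ 0 := by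
    have hBne : (∑ i, wb i * xm i * xm i) ≠ 0 := by
      have h1 : B xm = ∑ i, wb i * xm i * xm i := by rw [hB]
      rw [← h1]; exact hBm.ne'
    obtain ⟨i, -, hi⟩ := Finset.exists_ne_zero_of_sum_ne_zero hBne
    by_cases h : (i : ℕ) < k
    · exfalso; rw [hwb i, if_pos h] at hi; simp at hi
    · exact ⟨i, h, fun h0 => hi (by rw [h0]; ring)⟩
  have hsA : 0 < Real.sqrt (A xm + ε2) := Real.sqrt_pos.mpr hAε
  have hv0 : v i0 ≠ 0 := by
    have hvi : v i0 = xm i0 / Real.sqrt (B xm) := by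
      rw [hv]
      simp only [PiLp.sub_apply, PiLp.smul_apply, smul_eq_mul, hvA, hvB, PiLp.toLp_apply]
      rw [hwa i0, hwb i0, if_neg hi0k, if_neg hi0k]
      field_simp; ring
    rw [hvi]
    exact div_ne_zero hxi0 hsB.ne'
  have hβ : β ≠ 0 := by
    intro h0
    rw [h0, zero_smul, add_zero] at hvec
    have hα : α ≠ 0 := by
      intro h1; exact hab (by rw [h0, h1]; rfl)
    exact hreg xm hxmM ((smul_eq_zero.mp hvec).resolve_left hα)
  have hα : α ≠ 0 := by
    intro h0
    rw [h0, zero_smul, zero_add] at hvec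
    have hv0' : v = 0 := (smul_eq_zero.mp hvec).resolve_left hβ
    rw [hv0'] at hv0
    exact hv0 rfl
  have hμ : gF xm = (-(β / α)) • v := by
    have h1 : α • gF xm = -(β • v) := eq_neg_of_add_eq_zero_left hvec
    calc gF xm = α⁻¹ • (α • gF xm) := by rw [smul_smul, inv_mul_cancel₀ hα, one_smul]
      _ = (-(β / α)) • v := by
          rw [h1, smul_neg, smul_smul, ← neg_smul, div_eq_inv_mul]
  -- scaling of Q
  have hQsmul : ∀ (s : ℝ) (y : EuclideanSpace ℝ (Fin (k + l))), Q (s • y) = s ^ 2 * Q y := by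
    intro s y
    rw [hQ, hQ, Finset.mul_sum]
    exact Finset.sum_congr rfl fun i _ => by
      simp only [PiLp.smul_apply, smul_eq_mul]; ring
  -- Q of the gradient direction is negative
  have hsA2 : Real.sqrt (A xm + ε2) * Real.sqrt (A xm + ε2) = A xm + ε2 :=
    Real.mul_self_sqrt hAε.le
  have hsB2 : Real.sqrt (B xm) * Real.sqrt (B xm) = B xm := Real.mul_self_sqrt hBm.le
  have hQv : Q v = A xm / (A xm + ε2) - 1 := by
    rw [hQ]
    have hterm : ∀ i : Fin (k + l), (if (i : ℕ) < k then (1:ℝ) else -1) * v i * v i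
        = wa i * xm i * xm i / (A xm + ε2) - wb i * xm i * xm i / (B xm) := by
      intro i
      have hvi : v i = (1 / (2 * Real.sqrt (B xm))) * (2 * wb i * xm i)
          - (1 / (2 * Real.sqrt (A xm + ε2))) * (2 * wa i * xm i) := by
        rw [hv]
        simp only [PiLp.sub_apply, PiLp.smul_apply, smul_eq_mul, hvA, hvB, PiLp.toLp_apply]
      rw [hvi, hwa i, hwb i]
      by_cases h : (i : ℕ) < k
      · rw [if_pos h, if_pos h, if_pos h]
        have hvv : (1 / (2 * Real.sqrt (B xm))) * (2 * (0:ℝ) * xm i)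
            - (1 / (2 * Real.sqrt (A xm + ε2))) * (2 * 1 * xm i)
            = -(xm i / Real.sqrt (A xm + ε2)) := by field_simp; ring
        rw [hvv]
        calc (1:ℝ) * -(xm i / Real.sqrt (A xm + ε2)) * -(xm i / Real.sqrt (A xm + ε2))
            = xm i * xm i / (Real.sqrt (A xm + ε2) * Real.sqrt (A xm + ε2)) := by ring
          _ = xm i * xm i / (A xm + ε2) := by rw [hsA2]
          _ = 1 * xm i * xm i / (A xm + ε2) - 0 * xm i * xm i / (B xm) := by ring
      · rw [if_neg h, if_neg h, if_neg h]
        have hvv : (1 / (2 * Real.sqrt (B xm))) * (2 * (1:ℝ) * xm i)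
            - (1 / (2 * Real.sqrt (A xm + ε2))) * (2 * 0 * xm i)
            = xm i / Real.sqrt (B xm) := by field_simp; ring
        rw [hvv]
        calc (-1:ℝ) * (xm i / Real.sqrt (B xm)) * (xm i / Real.sqrt (B xm))
            = -(xm i * xm i / (Real.sqrt (B xm) * Real.sqrt (B xm))) := by ring
          _ = -(xm i * xm i / (B xm)) := by rw [hsB2]
          _ = 0 * xm i * xm i / (A xm + ε2) - 1 * xm i * xm i / (B xm) := by ring
    have hAxm : A xm = ∑ i, wa i * xm i * xm i := by rw [hA]
    have hBxm : B xm = ∑ i, wb i * xm i * xm i := by rw [hB]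
    calc ∑ i : Fin (k + l), (if (i : ℕ) < k then (1:ℝ) else -1) * v i * v i
        = ∑ i, (wa i * xm i * xm i / (A xm + ε2) - wb i * xm i * xm i / (B xm)) :=
          Finset.sum_congr rfl fun i _ => hterm i
      _ = (∑ i, wa i * xm i * xm i) / (A xm + ε2) - (∑ i, wb i * xm i * xm i) / (B xm) := by
          rw [Finset.sum_sub_distrib, Finset.sum_div, Finset.sum_div]
      _ = A xm / (A xm + ε2) - B xm / (B xm) := by rw [← hAxm, ← hBxm]
      _ = A xm / (A xm + ε2) - 1 := by rw [div_self hBm.ne']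
  have hQvneg : Q v < 0 := by
    rw [hQv]
    have h1 : A xm / (A xm + ε2) < 1 := (div_lt_one hAε).mpr (by linarith)
    linarith
  have hgne : gF xm ≠ 0 := hreg xm hxmM
  have hQg : Q (gF xm) < 0 := by
    rw [hμ, hQsmul]
    have hne : -(β / α) ≠ 0 := neg_ne_zero.mpr (div_ne_zero hβ hα)
    have h2 : 0 < (-(β / α)) ^ 2 := lt_of_le_of_ne (sq_nonneg _) (Ne.symm (pow_ne_zero 2 hne))
    exact mul_neg_of_pos_of_neg h2 hQvneg
  obtain ⟨ν, hν⟩ : ∃ ν : EuclideanSpace ℝ (Fin (k + l)), ν = ‖gF xm‖⁻¹ • gF xm :=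
    ⟨‖gF xm‖⁻¹ • gF xm, rfl⟩
  have hνnorm : ‖ν‖ = 1 := by rw [hν]; exact norm_smul_inv_norm hgne
  have hQν : Q ν < 0 := by
    rw [hν, hQsmul]
    have h3 : 0 < ‖gF xm‖ := norm_pos_iff.mpr hgne
    have h2 : 0 < (‖gF xm‖⁻¹) ^ 2 := by positivity
    exact mul_neg_of_pos_of_neg h2 hQg
  obtain ⟨t, htdef⟩ : ∃ t : ℝ, t = (Real.sqrt (-Q ν))⁻¹ := ⟨(Real.sqrt (-Q ν))⁻¹, rfl⟩
  have ht0 : 0 < t := by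
    rw [htdef]; exact inv_pos.mpr (Real.sqrt_pos.mpr (by linarith))
  have ht2 : t * t * (-(Q ν)) = 1 := by
    rw [htdef, ← mul_inv, Real.mul_self_sqrt (by linarith : (0:ℝ) ≤ -Q ν)]
    exact inv_mul_cancel₀ (by linarith)
  obtain ⟨z, hzdef⟩ : ∃ z : EuclideanSpace ℝ (Fin (k + l)),
      ∀ i, z i = t * (if (i : ℕ) < k then ν i else -(ν i)) :=
    ⟨WithLp.toLp 2 (fun i => t * (if (i : ℕ) < k then ν i else -(ν i))), fun _ => rfl⟩
  have hzi := hzdef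
  have hQz : Q z = -1 := by
    rw [hQ]
    have hterm : ∀ i : Fin (k + l), (if (i : ℕ) < k then (1:ℝ) else -1) * z i * z i
        = t * t * ((if (i : ℕ) < k then (1:ℝ) else -1) * ν i * ν i) := by
      intro i
      rw [hzi i]
      by_cases h : (i : ℕ) < k
      · simp only [if_pos h]; ring
      · simp only [if_neg h]; ring
    calc ∑ i : Fin (k + l), (if (i : ℕ) < k then (1:ℝ) else -1) * z i * z i
        = ∑ i : Fin (k + l), t * t * ((if (i : ℕ) < k then (1:ℝ) else -1) * ν i * ν i) :=
          Finset.sum_congr rfl fun i _ => hterm i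
      _ = t * t * Q ν := by rw [← Finset.mul_sum, hQ]
      _ = -1 := by linear_combination -ht2
  have hgQz : gQ z = (2 * t) • ν := by
    have h3 : Q = fun y : EuclideanSpace ℝ (Fin (k + l)) =>
        ∑ i : Fin (k + l), (if (i : ℕ) < k then (1:ℝ) else -1) * y i * y i := funext hQ
    have h2 := wsum_hasGradientAt (fun i : Fin (k + l) => if (i : ℕ) < k then (1:ℝ) else -1) z
    rw [← h3] at h2
    have h4 := (hgQ z).unique h2
    rw [h4]
    ext i
    show 2 * (if (i : ℕ) < k then (1:ℝ) else -1) * z i = ((2 * t) • ν) i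
    simp only [PiLp.smul_apply, smul_eq_mul, hzi i]
    by_cases h : (i : ℕ) < k
    · rw [if_pos h, if_pos h]; ring
    · rw [if_neg h, if_neg h]; ring
  have h2t : (0:ℝ) < 2 * t := by linarith
  have hν2 : ‖gQ z‖⁻¹ • gQ z = ν := by
    rw [hgQz, norm_smul, Real.norm_eq_abs, abs_of_pos h2t, hνnorm, mul_one, smul_smul,
      inv_mul_cancel₀ h2t.ne', one_smul]
  exact hGauss xm hxmM z hQz (by rw [hν2, ← hν])
end

section
/- Let f₁, f₂ be linearly independent solutions on ℝ of y'' = g(z)y with g continuous. If the surface S = {(t·f₁(z), t·f₂(z), z) : |t| ≤ 1, z ∈ ℝ} contains a straight line other than the z-axis, then g ≡ 0. -/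
/-!
A line in the strip cannot be horizontal, since every horizontal slice of the strip is bounded.
Parametrised by `z`, the line meets the plane through the `z`-axis spanned by `(f₁ z, f₂ z, 0)`
at the height `z`, which gives `f₁ ℓ₂ = f₂ ℓ₁` for affine `ℓᵢ = aᵢ + bᵢ z`. Differentiating
twice and using `fᵢ'' = g fᵢ` leaves `b₂ f₁' = b₁ f₂'`, so `h = b₂ f₁ - b₁ f₂` is a constant
solution of `h'' = g h`, and then `g h ≡ 0`. If `b ≠ 0`, independence makes `h` nonzero, so
`g ≡ 0`; if `b = 0`, independence makes `a = 0`, i.e. the line is the `z`-axis.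
-/

def strip (f₁ f₂ : ℝ → ℝ) : Set (ℝ × ℝ × ℝ) :=
  {p | ∃ t z : ℝ, |t| ≤ 1 ∧ p = (t * f₁ z, t * f₂ z, z)}

section Geometry

variable {f₁ f₂ : ℝ → ℝ} {p p₀ v : ℝ × ℝ × ℝ}

theorem abs_le_of_mem_strip (hp : p ∈ strip f₁ f₂) :
    |p.1| ≤ |f₁ p.2.2| ∧ |p.2.1| ≤ |f₂ p.2.2| := by
  obtain ⟨t, z, ht, rfl⟩ := hp
  simp only [abs_mul]
  exact ⟨mul_le_of_le_one_left (abs_nonneg _) ht, mul_le_of_le_one_left (abs_nonneg _) ht⟩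

theorem fst_mul_eq_of_mem_strip (hp : p ∈ strip f₁ f₂) :
    p.1 * f₂ p.2.2 = p.2.1 * f₁ p.2.2 := by
  obtain ⟨t, z, -, rfl⟩ := hp
  ring

theorem eq_zero_of_forall_abs_add_mul_le {a b C : ℝ} (h : ∀ s, |a + s * b| ≤ C) : b = 0 := by
  by_contra hb
  have hs := (le_abs_self _).trans (h ((C + 1 - a) / b))
  rw [div_mul_cancel₀ _ hb] at hs
  linarith

theorem snd_snd_ne_zero_of_line_subset_strip (hv : v ≠ 0)
    (hline : ∀ s : ℝ, p₀ + s • v ∈ strip f₁ f₂) : v.2.2 ≠ 0 := by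
  intro hv₃
  have hv₁ : v.1 = 0 := eq_zero_of_forall_abs_add_mul_le (C := |f₁ p₀.2.2|) fun s => by
    simpa [hv₃] using (abs_le_of_mem_strip (hline s)).1
  have hv₂ : v.2.1 = 0 := eq_zero_of_forall_abs_add_mul_le (C := |f₂ p₀.2.2|) fun s => by
    simpa [hv₃] using (abs_le_of_mem_strip (hline s)).2
  exact hv (Prod.ext hv₁ (Prod.ext hv₂ hv₃))

theorem mul_affine_eq_of_line_subset_strip (hline : ∀ s : ℝ, p₀ + s • v ∈ strip f₁ f₂)
    (hv₃ : v.2.2 ≠ 0) (z : ℝ) :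
    f₁ z * ((p₀.2.1 * v.2.2 - p₀.2.2 * v.2.1) + v.2.1 * z) =
      f₂ z * ((p₀.1 * v.2.2 - p₀.2.2 * v.1) + v.1 * z) := by
  set s := (z - p₀.2.2) / v.2.2
  have hz : p₀.2.2 + s * v.2.2 = z := by simp only [s]; field_simp; ring
  have h := fst_mul_eq_of_mem_strip (hline s)
  simp only [Prod.fst_add, Prod.snd_add, Prod.smul_fst, Prod.smul_snd, smul_eq_mul, hz] at h
  have hsv : s * v.2.2 = z - p₀.2.2 := by linarith
  linear_combination (-v.2.2) * h + (f₂ z * v.1 - f₁ z * v.2.1) * hsv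

theorem line_eq_z_axis (hv₃ : v.2.2 ≠ 0) (hv₁ : v.1 = 0) (hv₂ : v.2.1 = 0)
    (hp₁ : p₀.1 = 0) (hp₂ : p₀.2.1 = 0) :
    {p | ∃ s : ℝ, p = p₀ + s • v} = {p : ℝ × ℝ × ℝ | p.1 = 0 ∧ p.2.1 = 0} := by
  ext ⟨x, y, z⟩
  simp only [Set.mem_ofPred_eq, Prod.ext_iff, Prod.fst_add, Prod.snd_add, Prod.smul_fst,
    Prod.smul_snd, smul_eq_mul, hv₁, hv₂, hp₁, hp₂, mul_zero, add_zero]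
  constructor
  · rintro ⟨s, hx, hy, -⟩
    exact ⟨hx, hy⟩
  · rintro ⟨hx, hy⟩
    exact ⟨(z - p₀.2.2) / v.2.2, hx, hy, by field_simp; ring⟩

end Geometry

theorem eq_zero_of_forall_mul_eq {f₁ f₂ : ℝ → ℝ} (hind : LinearIndependent ℝ ![f₁, f₂])
    {a b : ℝ} (h : ∀ z, f₁ z * a = f₂ z * b) : a = 0 ∧ b = 0 := by
  have := LinearIndependent.pair_iff.mp hind a (-b) (funext fun z => by
    simp [mul_comm a, mul_comm b, h z])
  exact ⟨this.1, neg_eq_zero.mp this.2⟩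

section ODE

variable {g f₁ f₂ f₁' f₂' : ℝ → ℝ}

theorem mul_deriv_eq_of_mul_affine_eq
    (hd₁ : ∀ z, HasDerivAt f₁ (f₁' z) z) (hd₁' : ∀ z, HasDerivAt f₁' (g z * f₁ z) z)
    (hd₂ : ∀ z, HasDerivAt f₂ (f₂' z) z) (hd₂' : ∀ z, HasDerivAt f₂' (g z * f₂ z) z)
    {a₁ b₁ a₂ b₂ : ℝ} (hF : ∀ z, f₁ z * (a₂ + b₂ * z) = f₂ z * (a₁ + b₁ * z)) (z : ℝ) :
    b₂ * f₁' z = b₁ * f₂' z := by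
  have hℓ : ∀ a b z : ℝ, HasDerivAt (fun z => a + b * z) b z := fun a b z => by
    simpa using ((hasDerivAt_id z).const_mul b).const_add a
  have hF' : ∀ z, f₁' z * (a₂ + b₂ * z) + f₁ z * b₂ = f₂' z * (a₁ + b₁ * z) + f₂ z * b₁ :=
    fun z => ((hd₁ z).mul (hℓ a₂ b₂ z)).unique <|
      ((hd₂ z).mul (hℓ a₁ b₁ z)).congr_of_eventuallyEq (.of_forall hF)
  have hF'' := (((hd₁' z).mul (hℓ a₂ b₂ z)).add ((hd₁ z).mul_const b₂)).unique <|
    (((hd₂' z).mul (hℓ a₁ b₁ z)).add ((hd₂ z).mul_const b₁)).congr_of_eventuallyEq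
      (.of_forall hF')
  linear_combination (hF'' - g z * hF z) / 2

theorem eq_zero_of_solution_of_deriv_eq_zero {h h' : ℝ → ℝ}
    (hd : ∀ z, HasDerivAt h (h' z) z) (hd' : ∀ z, HasDerivAt h' (g z * h z) z)
    (hh' : ∀ z, h' z = 0) (hne : ∃ z₀, h z₀ ≠ 0) (z : ℝ) : g z = 0 := by
  have hconst : ∀ x, h x = h z := fun x =>
    is_const_of_deriv_eq_zero (fun y => (hd y).differentiableAt)
      (fun y => (hd y).deriv.trans (hh' y)) x z
  have hgh : g z * h z = 0 := (hd' z).unique <| by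
    rw [funext hh']; exact hasDerivAt_const z 0
  obtain ⟨z₀, hz₀⟩ := hne
  exact (mul_eq_zero.mp hgh).resolve_right (hconst z₀ ▸ hz₀)

theorem eq_zero_of_mul_affine_eq
    (hd₁ : ∀ z, HasDerivAt f₁ (f₁' z) z) (hd₁' : ∀ z, HasDerivAt f₁' (g z * f₁ z) z)
    (hd₂ : ∀ z, HasDerivAt f₂ (f₂' z) z) (hd₂' : ∀ z, HasDerivAt f₂' (g z * f₂ z) z)
    (hind : LinearIndependent ℝ ![f₁, f₂]) {a₁ b₁ a₂ b₂ : ℝ} (hb : ¬(b₁ = 0 ∧ b₂ = 0))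
    (hF : ∀ z, f₁ z * (a₂ + b₂ * z) = f₂ z * (a₁ + b₁ * z)) : ∀ z, g z = 0 := by
  refine eq_zero_of_solution_of_deriv_eq_zero (h := fun z => b₂ * f₁ z - b₁ * f₂ z)
    (fun z => ((hd₁ z).const_mul b₂).sub ((hd₂ z).const_mul b₁))
    (fun z => (((hd₁' z).const_mul b₂).sub ((hd₂' z).const_mul b₁)).congr_deriv (by ring))
    (fun z => sub_eq_zero.mpr (mul_deriv_eq_of_mul_affine_eq hd₁ hd₁' hd₂ hd₂' hF z)) ?_
  by_contra! h
  exact hb (eq_zero_of_forall_mul_eq hind fun z => by linear_combination h z).symm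

end ODE

theorem strip_line_forces_g_zero_general
    (g f₁ f₂ f₁' f₂' : ℝ → ℝ)
    (hd₁ : ∀ z, HasDerivAt f₁ (f₁' z) z) (hd₁' : ∀ z, HasDerivAt f₁' (g z * f₁ z) z)
    (hd₂ : ∀ z, HasDerivAt f₂ (f₂' z) z) (hd₂' : ∀ z, HasDerivAt f₂' (g z * f₂ z) z)
    (hind : LinearIndependent ℝ ![f₁, f₂])
    (S : Set (ℝ × ℝ × ℝ))
    (hS : S = {p | ∃ t z : ℝ, |t| ≤ 1 ∧ p = (t * f₁ z, t * f₂ z, z)})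
    (p₀ v : ℝ × ℝ × ℝ) (hv : v ≠ 0)
    (hline : ∀ s : ℝ, p₀ + s • v ∈ S)
    (hnotz : {p | ∃ s : ℝ, p = p₀ + s • v} ≠ {p : ℝ × ℝ × ℝ | p.1 = 0 ∧ p.2.1 = 0}) :
    ∀ z, g z = 0 := by
  subst hS
  have hv₃ := snd_snd_ne_zero_of_line_subset_strip hv hline
  have hF := mul_affine_eq_of_line_subset_strip hline hv₃
  by_cases hb : v.1 = 0 ∧ v.2.1 = 0
  · obtain ⟨hv₁, hv₂⟩ := hb
    obtain ⟨hp₂, hp₁⟩ := eq_zero_of_forall_mul_eq hind fun z => by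
      simpa [hv₁, hv₂] using hF z
    exact absurd (line_eq_z_axis hv₃ hv₁ hv₂ ((mul_eq_zero.mp hp₁).resolve_right hv₃)
      ((mul_eq_zero.mp hp₂).resolve_right hv₃)) hnotz
  · exact eq_zero_of_mul_affine_eq hd₁ hd₁' hd₂ hd₂' hind hb hF

/-- Let `f₁, f₂` be linearly independent `C²` solutions on `ℝ` of `y'' = g(z)·y` with `g`
continuous.  If the strip `S = {(t·f₁(z), t·f₂(z), z) : |t| ≤ 1}` contains a straight line
other than the `z`-axis, then `g ≡ 0`. -/
theorem strip_line_forces_g_zero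
    (g f₁ f₂ f₁' f₂' : ℝ → ℝ) (hg : Continuous g)
    (hd₁ : ∀ z, HasDerivAt f₁ (f₁' z) z) (hd₁' : ∀ z, HasDerivAt f₁' (g z * f₁ z) z)
    (hd₂ : ∀ z, HasDerivAt f₂ (f₂' z) z) (hd₂' : ∀ z, HasDerivAt f₂' (g z * f₂ z) z)
    (hind : LinearIndependent ℝ ![f₁, f₂])
    (S : Set (ℝ × ℝ × ℝ))
    (hS : S = {p | ∃ t z : ℝ, |t| ≤ 1 ∧ p = (t * f₁ z, t * f₂ z, z)})
    (p₀ v : ℝ × ℝ × ℝ) (hv : v ≠ 0)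
    (hline : ∀ s : ℝ, p₀ + s • v ∈ S)
    (hnotz : {p | ∃ s : ℝ, p = p₀ + s • v} ≠ {p : ℝ × ℝ × ℝ | p.1 = 0 ∧ p.2.1 = 0}) :
    ∀ z, g z = 0 :=
  strip_line_forces_g_zero_general g f₁ f₂ f₁' f₂' hd₁ hd₁' hd₂ hd₂' hind S hS p₀ v hv hline hnotz
end
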